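/- arXiv:1410.8349 — 4 statements merged into one kernel-verified Lean document; each statement's English description precedes it below -/
import Mathlib

section
/- For any digraph G and integers s,t ≥ 1, the maximum winning probability of the guessing game on G(t) with alphabet size s equals the maximum winning probability of the guessing game on G with alphabet size s^t; equivalently gn(G(t),s) = t·gn(G,s^t). -/
/-- A pure strategy for the guessing game on the digraph with edge relation `E`
and alphabet `Fin s`: each player `v` guesses based only on the values of its
in-neighbours. -/
structure GuessStrategy (V : Type*) (E : V → V → Prop) (s : ℕ) where
  f : V → (V → Fin s) → Fin s
  local_dep : ∀ v a b, (∀ u, E u v → a u = b u) → f v a = f v b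

/-- The number of assignments on which every player guesses correctly. -/
noncomputable def winCount {V : Type*} [Fintype V] (E : V → V → Prop) (s : ℕ)
    (F : GuessStrategy V E s) : ℕ :=
  Nat.card {a : V → Fin s // ∀ v, F.f v a = a v}

/-- The winning probability of strategy `F` in the guessing game `(G,s)`. -/
noncomputable def winP {V : Type*} [Fintype V] (E : V → V → Prop) (s : ℕ)
    (F : GuessStrategy V E s) : ℝ :=
  (winCount E s F : ℝ) / (s ^ Fintype.card V : ℕ)

/-- The maximum winning probability over all strategies. -/
noncomputable def maxWinP {V : Type*} [Fintype V] (E : V → V → Prop) (s : ℕ) : ℝ :=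
  ⨆ F : GuessStrategy V E s, winP E s F

/-- The guessing number `gn(G,s) = |V(G)| + log_s (max winning probability)`. -/
noncomputable def gn {V : Type*} [Fintype V] (E : V → V → Prop) (s : ℕ) : ℝ :=
  Fintype.card V + Real.logb s (maxWinP E s)

/-- The `t`-uniform blowup of a digraph: each vertex is replaced by `t` copies. -/
def blowup {V : Type*} (E : V → V → Prop) (t : ℕ) : V × Fin t → V × Fin t → Prop :=
  fun p q => E p.1 q.1

/-! The `t` copies of a vertex of `G(t)` see exactly the same values, namely those on the copies
of its in-neighbours in `G`. So the class of `t` copies can be merged into one player of `G`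
whose value is the word of length `t` over `Fin s` carried by the class, i.e. a letter of
`Fin (s ^ t)`. This identifies assignments, strategies and winning assignments of `(G(t), s)`
with those of `(G, s ^ t)`; the number of assignments is `s ^ (t |V|)` in both games. -/

attribute [ext] GuessStrategy

namespace GuessStrategy

variable {V : Type*} {E : V → V → Prop} {s t : ℕ}

def blowupAssignmentEquiv (V : Type*) (s t : ℕ) : (V × Fin t → Fin s) ≃ (V → Fin (s ^ t)) :=
  (Equiv.curry V (Fin t) (Fin s)).trans (Equiv.piCongrRight fun _ => finFunctionFinEquiv)

@[simp] lemma blowupAssignmentEquiv_apply (a : V × Fin t → Fin s) (v : V) :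
    blowupAssignmentEquiv V s t a v = finFunctionFinEquiv fun i => a (v, i) := rfl

@[simp] lemma blowupAssignmentEquiv_symm_apply (b : V → Fin (s ^ t)) (p : V × Fin t) :
    (blowupAssignmentEquiv V s t).symm b p = finFunctionFinEquiv.symm (b p.1) p.2 := rfl

def ofBlowup (F : GuessStrategy (V × Fin t) (blowup E t) s) : GuessStrategy V E (s ^ t) where
  f v b := finFunctionFinEquiv fun i => F.f (v, i) ((blowupAssignmentEquiv V s t).symm b)
  local_dep v a b h := by
    refine congrArg _ (funext fun i => F.local_dep _ _ _ ?_)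
    rintro ⟨u, j⟩ hu
    simp only [blowupAssignmentEquiv_symm_apply, h u hu]

def toBlowup (F : GuessStrategy V E (s ^ t)) : GuessStrategy (V × Fin t) (blowup E t) s where
  f p a := finFunctionFinEquiv.symm (F.f p.1 (blowupAssignmentEquiv V s t a)) p.2
  local_dep := by
    rintro ⟨v, i⟩ a b h
    have hguess : F.f v (blowupAssignmentEquiv V s t a) = F.f v (blowupAssignmentEquiv V s t b) :=
      F.local_dep _ _ _ fun u hu => by
        simp only [blowupAssignmentEquiv_apply]
        exact congrArg _ (funext fun j => h (u, j) hu)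
    simp only [hguess]

def blowupEquiv : GuessStrategy (V × Fin t) (blowup E t) s ≃ GuessStrategy V E (s ^ t) where
  toFun := ofBlowup
  invFun := toBlowup
  left_inv F := by ext; simp [ofBlowup, toBlowup]
  right_inv F := by ext; simp [ofBlowup, toBlowup]

lemma blowupEquiv_guess_eq_iff (F : GuessStrategy (V × Fin t) (blowup E t) s)
    (a : V × Fin t → Fin s) (v : V) :
    (blowupEquiv F).f v (blowupAssignmentEquiv V s t a) = blowupAssignmentEquiv V s t a v ↔
      ∀ i, F.f (v, i) a = a (v, i) := by
  simp [blowupEquiv, ofBlowup, funext_iff]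

variable [Fintype V]

lemma winCount_blowupEquiv (F : GuessStrategy (V × Fin t) (blowup E t) s) :
    winCount E (s ^ t) (blowupEquiv F) = winCount (blowup E t) s F :=
  Nat.card_congr <| .symm <| (blowupAssignmentEquiv V s t).subtypeEquiv fun a => by
    simp only [blowupEquiv_guess_eq_iff, Prod.forall]

lemma winP_blowupEquiv (F : GuessStrategy (V × Fin t) (blowup E t) s) :
    winP E (s ^ t) (blowupEquiv F) = winP (blowup E t) s F := by
  rw [winP, winP, winCount_blowupEquiv, Fintype.card_prod, Fintype.card_fin, mul_comm, pow_mul]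

end GuessStrategy

theorem maxWinP_blowup {V : Type*} [Fintype V] (E : V → V → Prop) (s t : ℕ) :
    maxWinP (blowup E t) s = maxWinP E (s ^ t) :=
  GuessStrategy.blowupEquiv.iSup_congr GuessStrategy.winP_blowupEquiv

theorem Real.logb_eq_mul_logb_pow (b x : ℝ) {t : ℕ} (ht : t ≠ 0) :
    Real.logb b x = t * Real.logb (b ^ t) x := by
  rw [Real.logb, Real.logb, Real.log_pow]
  by_cases hb : Real.log b = 0
  · simp [hb]
  · field_simp

theorem gn_blowup {V : Type*} [Fintype V] (E : V → V → Prop) (s : ℕ) {t : ℕ} (ht : t ≠ 0) :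
    gn (blowup E t) s = t * gn E (s ^ t) := by
  rw [gn, gn, maxWinP_blowup, Fintype.card_prod, Fintype.card_fin,
    Real.logb_eq_mul_logb_pow _ _ ht]
  push_cast
  ring

theorem blowup_maxWinP_eq_general {V : Type*} [Fintype V] (E : V → V → Prop)
    (s t : ℕ) (ht : 1 ≤ t) :
    maxWinP (blowup E t) s = maxWinP E (s ^ t) ∧
    gn (blowup E t) s = t * gn E (s ^ t) :=
  ⟨maxWinP_blowup E s t, gn_blowup E s (by omega)⟩

/-- For any (loopless) digraph `G` and integers `s, t ≥ 1`, the maximum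
winning probability on the `t`-uniform blowup `G(t)` with alphabet size `s` equals that
on `G` with alphabet size `s^t`; equivalently `gn(G(t),s) = t·gn(G,s^t)`. -/
theorem blowup_maxWinP_eq {V : Type*} [Fintype V] (E : V → V → Prop) (hE : Irreflexive E)
    (s t : ℕ) (hs : 1 ≤ s) (ht : 1 ≤ t) :
    maxWinP (blowup E t) s = maxWinP E (s ^ t) ∧
    gn (blowup E t) s = t * gn E (s ^ t) :=
  blowup_maxWinP_eq_general E s t ht
end

section
/- For any digraph G, integer t ≥ s ≥ 2, the guessing number satisfies gn(G,t) ≥ (⌊log_s t⌋ / log_s t)·gn(G,s). Consequently, for every ε > 0 there exists t_0 such that gn(G,t) ≥ gn(G,s) − ε for all t ≥ t_0. -/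
/-! Writing `W(s)` for the largest number of assignments won by one strategy,
`gn(G,s) = log_s W(s)`. Playing an optimal strategy coordinatewise on
`Fin (s^k) ≃ (Fin k → Fin s)` gives `W(s)^k ≤ W(s^k)`, i.e. `gn(G,s) ≤ gn(G,s^k)`, and clamping
values into a smaller alphabet gives `W(m) ≤ W(t)` for `m ≤ t`, i.e.
`log_t m · gn(G,m) ≤ gn(G,t)`. With `k = ⌊log_s t⌋` and `m = s^k` these combine to
`(k / log_s t) · gn(G,s) ≤ gn(G,t)`, and `k / log_s t → 1` as `t → ∞`. -/

open Filter Topology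

section GuessingGame

variable {V : Type*} [Fintype V] {E : V → V → Prop}

def GuessStrategy.zero (s : ℕ) [NeZero s] : GuessStrategy V E s :=
  ⟨fun _ _ => 0, fun _ _ _ _ => rfl⟩

instance {s : ℕ} [NeZero s] : Nonempty (GuessStrategy V E s) :=
  ⟨.zero s⟩

theorem winCount_le_pow_card (s : ℕ) (F : GuessStrategy V E s) :
    winCount E s F ≤ s ^ Fintype.card V := by
  calc winCount E s F ≤ Nat.card (V → Fin s) :=
        Nat.card_le_card_of_injective _ Subtype.val_injective
    _ = s ^ Fintype.card V := by simp [Nat.card_fun]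

variable (E) in
noncomputable def maxWinCount (s : ℕ) : ℕ :=
  ⨆ F : GuessStrategy V E s, winCount E s F

theorem bddAbove_range_winCount (s : ℕ) : BddAbove (Set.range (winCount E s)) :=
  ⟨_, Set.forall_mem_range.2 (winCount_le_pow_card s)⟩

theorem winCount_le_maxWinCount {s : ℕ} (F : GuessStrategy V E s) :
    winCount E s F ≤ maxWinCount E s :=
  le_ciSup (bddAbove_range_winCount s) F

theorem exists_winCount_eq_maxWinCount (s : ℕ) [NeZero s] :
    ∃ F : GuessStrategy V E s, winCount E s F = maxWinCount E s :=
  Nat.sSup_mem (Set.range_nonempty _) (bddAbove_range_winCount s)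

theorem maxWinCount_pos (s : ℕ) [NeZero s] : 0 < maxWinCount E s := by
  have : Nonempty {a : V → Fin s // ∀ v, (GuessStrategy.zero (E := E) s).f v a = a v} :=
    ⟨⟨0, fun _ => rfl⟩⟩
  exact Nat.card_pos.trans_le (winCount_le_maxWinCount (.zero s))

theorem maxWinP_eq (s : ℕ) [NeZero s] :
    maxWinP E s = maxWinCount E s / (s ^ Fintype.card V : ℕ) := by
  obtain ⟨F, hF⟩ := exists_winCount_eq_maxWinCount (E := E) s
  have hle : ∀ G, winP E s G ≤ winP E s F := fun G =>
    div_le_div_of_nonneg_right (by exact_mod_cast hF ▸ winCount_le_maxWinCount G) (by positivity)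
  rw [← hF]
  exact le_antisymm (ciSup_le hle) (le_ciSup ⟨_, Set.forall_mem_range.2 hle⟩ F)

theorem gn_eq_logb_maxWinCount {s : ℕ} (hs : 1 < s) :
    gn E s = Real.logb s (maxWinCount E s) := by
  have : NeZero s := ⟨by omega⟩
  have hs' : (1 : ℝ) < s := by exact_mod_cast hs
  have hM : (maxWinCount E s : ℝ) ≠ 0 := by
    exact_mod_cast (maxWinCount_pos (E := E) s).ne'
  rw [gn, maxWinP_eq, Nat.cast_pow, Real.logb_div hM (by positivity), Real.logb_pow,
    Real.logb_self_eq_one hs']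
  ring

def GuessStrategy.pow {s : ℕ} (F : GuessStrategy V E s) (k : ℕ) : GuessStrategy V E (s ^ k) where
  f v a := finFunctionFinEquiv fun i => F.f v fun u => finFunctionFinEquiv.symm (a u) i
  local_dep v a b h :=
    congrArg finFunctionFinEquiv <| funext fun i => F.local_dep v _ _ fun u hu => by rw [h u hu]

theorem winCount_pow {s : ℕ} (F : GuessStrategy V E s) (k : ℕ) :
    winCount E (s ^ k) (F.pow k) = winCount E s F ^ k := by
  let decode : (V → Fin (s ^ k)) ≃ (Fin k → V → Fin s) :=
    (Equiv.arrowCongr (.refl V) finFunctionFinEquiv.symm).trans (Equiv.piComm _)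
  have hwin : ∀ a, (∀ v, (F.pow k).f v a = a v) ↔ ∀ i v, F.f v (decode a i) = decode a i v := by
    intro a
    simp only [GuessStrategy.pow, ← Equiv.eq_symm_apply, funext_iff]
    exact forall_comm
  have e := (decode.subtypeEquiv (q := fun g => ∀ i v, F.f v (g i) = g i v) hwin).trans
    (Equiv.subtypePiEquivPi (p := fun _ b => ∀ v, F.f v b = b v))
  rw [winCount, winCount, Nat.card_congr e, Nat.card_fun, Nat.card_eq_fintype_card (α := Fin k),
    Fintype.card_fin]

theorem maxWinCount_pow_le (s k : ℕ) [NeZero s] :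
    maxWinCount E s ^ k ≤ maxWinCount E (s ^ k) := by
  obtain ⟨F, hF⟩ := exists_winCount_eq_maxWinCount (E := E) s
  rw [← hF, ← winCount_pow]
  exact winCount_le_maxWinCount _

def GuessStrategy.extend {m : ℕ} (F : GuessStrategy V E m) {t : ℕ} (hm : 0 < m) (hmt : m ≤ t) :
    GuessStrategy V E t where
  f v a := Fin.castLE hmt <| F.f v fun u => ⟨min (a u) (m - 1), by omega⟩
  local_dep v a b h :=
    congrArg (Fin.castLE hmt) <| F.local_dep v _ _ fun u hu => by simp only [h u hu]

theorem winCount_le_winCount_extend {m t : ℕ} (F : GuessStrategy V E m) (hm : 0 < m)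
    (hmt : m ≤ t) : winCount E m F ≤ winCount E t (F.extend hm hmt) := by
  refine Nat.card_le_card_of_injective
    (fun b => ⟨fun v => Fin.castLE hmt (b.1 v), fun v => ?_⟩) fun b c hbc => ?_
  · have hclamp : (fun u => (⟨min (Fin.castLE hmt (b.1 u) : ℕ) (m - 1), by omega⟩ : Fin m)) = b.1 :=
      funext fun u => Fin.ext (by simp only [Fin.val_castLE]; omega)
    simp only [GuessStrategy.extend, hclamp, b.2 v]
  · exact Subtype.ext <| funext fun v =>
      Fin.castLE_injective hmt (congrFun (congrArg Subtype.val hbc) v)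

theorem maxWinCount_mono {m t : ℕ} (hm : 0 < m) (hmt : m ≤ t) :
    maxWinCount E m ≤ maxWinCount E t := by
  have : NeZero m := ⟨hm.ne'⟩
  obtain ⟨F, hF⟩ := exists_winCount_eq_maxWinCount (E := E) m
  exact hF ▸ (winCount_le_winCount_extend F hm hmt).trans (winCount_le_maxWinCount _)

theorem gn_le_gn_pow {s : ℕ} (hs : 1 < s) {k : ℕ} (hk : 0 < k) : gn E s ≤ gn E (s ^ k) := by
  have : NeZero s := ⟨by omega⟩
  have hs' : (1 : ℝ) < s := by exact_mod_cast hs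
  have hsk : (1 : ℝ) < (s ^ k : ℕ) := by exact_mod_cast Nat.one_lt_pow hk.ne' hs
  have hM : (0 : ℝ) < maxWinCount E s := by exact_mod_cast maxWinCount_pos s
  have hlogb : Real.logb s (maxWinCount E s) =
      Real.logb (s ^ k : ℕ) ((maxWinCount E s : ℝ) ^ k) := by
    have : Real.log s ≠ 0 := (Real.log_pos hs').ne'
    simp only [Real.logb, Nat.cast_pow, Real.log_pow]
    field_simp
  rw [gn_eq_logb_maxWinCount hs, gn_eq_logb_maxWinCount (Nat.one_lt_pow hk.ne' hs), hlogb]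
  exact Real.logb_le_logb_of_le hsk (by positivity) (by exact_mod_cast maxWinCount_pow_le s k)

theorem logb_mul_gn_le_gn {m t : ℕ} (hm : 1 < m) (hmt : m ≤ t) :
    Real.logb t m * gn E m ≤ gn E t := by
  have hm' : (1 : ℝ) < m := by exact_mod_cast hm
  have ht' : (1 : ℝ) < t := by exact_mod_cast hm.trans_le hmt
  have : NeZero m := ⟨by omega⟩
  have hM : (0 : ℝ) < maxWinCount E m := by exact_mod_cast maxWinCount_pos m
  rw [gn_eq_logb_maxWinCount hm, gn_eq_logb_maxWinCount (hm.trans_le hmt),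
    Real.mul_logb (by positivity) hm'.ne' (by linarith)]
  exact Real.logb_le_logb_of_le ht' hM (by exact_mod_cast maxWinCount_mono (by omega) hmt)

theorem floor_logb_div_logb_mul_gn_le {s t : ℕ} (hs : 1 < s) (hst : s ≤ t) :
    (⌊Real.logb s t⌋₊ / Real.logb s t) * gn E s ≤ gn E t := by
  rw [Real.natFloor_logb_natCast]
  set k := Nat.log s t
  have hk : 0 < k := Nat.log_pos hs hst
  have hpow : s ^ k ≤ t := Nat.pow_log_le_self s (by omega)
  have hlogb : (k : ℝ) / Real.logb s t = Real.logb t (s ^ k : ℕ) := by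
    rw [Nat.cast_pow, Real.logb_pow, div_eq_mul_inv, Real.inv_logb]
  calc (k / Real.logb s t) * gn E s ≤ (k / Real.logb s t) * gn E (s ^ k) := by
        have : 0 ≤ Real.logb s t :=
          Real.logb_nonneg (by exact_mod_cast hs) (by exact_mod_cast (by omega : 1 ≤ t))
        gcongr
        exact gn_le_gn_pow hs hk
    _ ≤ gn E t := hlogb ▸ logb_mul_gn_le_gn (Nat.one_lt_pow hk.ne' hs) hpow

theorem tendsto_floor_logb_div_logb {b : ℝ} (hb : 1 < b) :
    Tendsto (fun t : ℕ => (⌊Real.logb b t⌋₊ : ℝ) / Real.logb b t) atTop (𝓝 1) :=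
  tendsto_nat_floor_div_atTop.comp <| (Real.tendsto_logb_atTop hb).comp tendsto_natCast_atTop_atTop

end GuessingGame

theorem gn_almost_monotone_general {V : Type*} [Fintype V] (E : V → V → Prop)
    (s : ℕ) (hs : 2 ≤ s) :
    (∀ t : ℕ, s ≤ t →
      gn E t ≥ ((⌊Real.logb s t⌋₊ : ℝ) / Real.logb s t) * gn E s) ∧
    ∀ ε : ℝ, 0 < ε → ∃ t₀ : ℕ, ∀ t : ℕ, t₀ ≤ t → gn E t ≥ gn E s - ε := by
  have hmain : ∀ t : ℕ, s ≤ t → gn E t ≥ ((⌊Real.logb s t⌋₊ : ℝ) / Real.logb s t) * gn E s :=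
    fun t hst => floor_logb_div_logb_mul_gn_le hs hst
  refine ⟨hmain, fun ε hε => ?_⟩
  have hlim : Tendsto (fun t : ℕ => ((⌊Real.logb s t⌋₊ : ℝ) / Real.logb s t) * gn E s) atTop
      (𝓝 (gn E s)) := by
    simpa only [one_mul] using
      (tendsto_floor_logb_div_logb (by exact_mod_cast hs)).mul_const (gn E s)
  obtain ⟨t₀, ht₀⟩ := eventually_atTop.mp
    ((hlim.eventually (lt_mem_nhds (sub_lt_self _ hε))).and (eventually_ge_atTop s))
  exact ⟨t₀, fun t ht => (ht₀ t ht).1.le.trans (hmain t (ht₀ t ht).2)⟩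

/-- For integers `t ≥ s ≥ 2`, `gn(G,t) ≥ (⌊log_s t⌋ / log_s t)·gn(G,s)`;
consequently for every `ε > 0` there is `t₀` with `gn(G,t) ≥ gn(G,s) − ε` for all `t ≥ t₀`. -/
theorem gn_almost_monotone {V : Type*} [Fintype V] (E : V → V → Prop) (hE : Irreflexive E)
    (s : ℕ) (hs : 2 ≤ s) :
    (∀ t : ℕ, s ≤ t →
      gn E t ≥ ((⌊Real.logb s t⌋₊ : ℝ) / Real.logb s t) * gn E s) ∧
    ∀ ε : ℝ, 0 < ε → ∃ t₀ : ℕ, ∀ t : ℕ, t₀ ≤ t → gn E t ≥ gn E s - ε :=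
  gn_almost_monotone_general E s hs
end

section
/- If an undirected graph G can be partitioned into k vertex-disjoint cliques, then the guessing game (G,s) admits a strategy winning with probability s^{-k}; hence gn(G,s) ≥ |V(G)| − κ(G), where κ(G) is the minimum clique cover number. -/
/-- The minimum clique cover number `κ(G)`: the least number of cliques into which the
vertex set of `G` can be partitioned. -/
noncomputable def cliqueCoverNum {V : Type*} [Fintype V] [DecidableEq V]
    (G : SimpleGraph V) : ℕ :=
  sInf {n | ∃ P : Finpartition (Finset.univ : Finset V),
    P.parts.card = n ∧ ∀ p ∈ P.parts, G.IsClique (p : Set V)}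

/-- A fractional clique cover of `G`: a weighting `w : K(G) → [0,1]` of the cliques with
total weight at least `1` on the cliques containing any given vertex. -/
def IsFracCliqueCover {V : Type*} [Fintype V] [DecidableEq V] (G : SimpleGraph V)
    (w : Finset V → ℝ) : Prop :=
  (∀ k, 0 ≤ w k ∧ w k ≤ 1) ∧ (∀ k, w k ≠ 0 → G.IsClique (k : Set V)) ∧
  ∀ v : V, 1 ≤ ∑ k ∈ Finset.univ.filter (fun k : Finset V => v ∈ k), w k

/-- A regular fractional clique cover: the total weight on the cliques containing any
given vertex is exactly `1`. -/
def IsRegFracCliqueCover {V : Type*} [Fintype V] [DecidableEq V] (G : SimpleGraph V)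
    (w : Finset V → ℝ) : Prop :=
  (∀ k, 0 ≤ w k ∧ w k ≤ 1) ∧ (∀ k, w k ≠ 0 → G.IsClique (k : Set V)) ∧
  ∀ v : V, ∑ k ∈ Finset.univ.filter (fun k : Finset V => v ∈ k), w k = 1

/-- The fractional clique cover number `κ_f(G)`. -/
noncomputable def fracCliqueCoverNum {V : Type*} [Fintype V] [DecidableEq V]
    (G : SimpleGraph V) : ℝ :=
  sInf {x : ℝ | ∃ w : Finset V → ℝ, IsFracCliqueCover G w ∧ x = ∑ k : Finset V, w k}

/-- The `t`-uniform blowup of a simple graph. -/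
def SimpleGraph.blowupG {V : Type*} (G : SimpleGraph V) (t : ℕ) :
    SimpleGraph (V × Fin t) where
  Adj p q := G.Adj p.1 q.1
  symm := ⟨fun _ _ h => G.adj_symm h⟩
  loopless := ⟨fun p h => G.irrefl h⟩

/-! On every clique of the partition each player guesses the value that makes the clique's
values sum to `0`. The team then wins exactly on the kernel of the homomorphism
`a ↦ (∑ u ∈ p, a u)_p` from `(Fin s)^V` to `(Fin s)^{parts}`; it is surjective, so its kernel
has `s^|V| / s^k` elements. -/

open Finset

section GuessingGame

variable {V : Type*} [Fintype V] (E : V → V → Prop) (s : ℕ)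

lemma winCount_le_pow (F : GuessStrategy V E s) : winCount E s F ≤ s ^ Fintype.card V := by
  calc winCount E s F ≤ Nat.card (V → Fin s) :=
        Nat.card_le_card_of_injective _ Subtype.val_injective
    _ = s ^ Fintype.card V := by simp [Nat.card_fun]

lemma winP_le_one (F : GuessStrategy V E s) : winP E s F ≤ 1 :=
  div_le_one_of_le₀ (mod_cast winCount_le_pow E s F) (Nat.cast_nonneg _)

lemma winP_le_maxWinP (F : GuessStrategy V E s) : winP E s F ≤ maxWinP E s :=
  le_ciSup ⟨1, by rintro _ ⟨F, rfl⟩; exact winP_le_one E s F⟩ F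

/-- For `s ≤ 1` this holds because `Real.logb s` vanishes identically (`Real.log 0 = 0`). -/
lemma card_sub_le_gn_of_pow_le_maxWinP {k : ℕ} (h : (1 / (s : ℝ)) ^ k ≤ maxWinP E s) :
    (Fintype.card V : ℝ) - k ≤ gn E s := by
  rw [gn, sub_eq_add_neg, add_le_add_iff_left]
  rcases le_or_gt s 1 with hs | hs
  · have hlog : Real.log s = 0 := by
      interval_cases s <;> simp
    simp [Real.logb, hlog]
  · have hs : (1 : ℝ) < s := mod_cast hs
    calc -(k : ℝ) = Real.logb s ((1 / (s : ℝ)) ^ k) := by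
          rw [Real.logb_pow, one_div, Real.logb_inv, Real.logb_self_eq_one hs, mul_neg, mul_one]
      _ ≤ Real.logb s (maxWinP E s) := Real.logb_le_logb_of_le hs (by positivity) h

end GuessingGame

namespace Finpartition

variable {V : Type*} [DecidableEq V] {u : Finset V} (P : Finpartition u)
  (M : Type*) [AddCommGroup M]

def partSum : (V → M) →+ (P.parts → M) where
  toFun a p := ∑ v ∈ (p : Finset V), a v
  map_zero' := by ext; simp
  map_add' a b := by ext; simp [sum_add_distrib]

@[simp]
lemma partSum_apply (a : V → M) (p : P.parts) : P.partSum M a p = ∑ v ∈ (p : Finset V), a v :=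
  rfl

lemma partSum_surjective : Function.Surjective (P.partSum M) := by
  intro y
  choose r hr using fun p : P.parts => P.nonempty_of_mem_parts p.2
  refine ⟨fun v => ∑ p, if r p = v then y p else 0, funext fun q => ?_⟩
  have hrq : ∀ p, r p ∈ (q : Finset V) ↔ p = q := fun p =>
    ⟨fun h => Subtype.ext (P.eq_of_mem_parts p.2 q.2 (hr p) h), fun h => h ▸ hr p⟩
  simp [sum_comm (s := (q : Finset V)), hrq]

lemma card_ker_partSum_mul [Fintype V] [Finite M] :
    Nat.card (P.partSum M).ker * Nat.card M ^ #P.parts = Nat.card M ^ Fintype.card V := by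
  have h := (P.partSum M).ker.card_mul_index
  rwa [AddSubgroup.index_ker, AddMonoidHom.range_eq_top_of_surjective _ (P.partSum_surjective M),
    AddSubgroup.card_top, Nat.card_fun, Nat.card_fun, Nat.card_eq_fintype_card (α := P.parts),
    Fintype.card_coe, Nat.card_eq_fintype_card (α := V)] at h

end Finpartition

section CliqueCoverStrategy

variable {V : Type*} [Fintype V] [DecidableEq V] {G : SimpleGraph V} {s : ℕ} [NeZero s]
  (P : Finpartition (univ : Finset V)) (hP : ∀ p ∈ P.parts, G.IsClique (p : Set V))

def cliqueCoverStrategy : GuessStrategy V G.Adj s where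
  f v a := -∑ u ∈ (P.part v).erase v, a u
  local_dep v _ _ hab := congrArg _ <| sum_congr rfl fun u hu =>
    hab u <| hP _ (P.part_mem.2 (mem_univ v)) (mem_of_mem_erase hu) (P.mem_part (mem_univ v))
      (ne_of_mem_erase hu)

lemma cliqueCoverStrategy_guess_eq_iff (a : V → Fin s) (v : V) :
    (cliqueCoverStrategy P hP).f v a = a v ↔ ∑ u ∈ P.part v, a u = 0 := by
  change -_ = _ ↔ _
  rw [neg_eq_iff_add_eq_zero, add_comm, add_sum_erase _ a (P.mem_part (mem_univ v))]

lemma cliqueCoverStrategy_wins_iff (a : V → Fin s) :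
    (∀ v, (cliqueCoverStrategy P hP).f v a = a v) ↔ a ∈ (P.partSum (Fin s)).ker := by
  simp only [cliqueCoverStrategy_guess_eq_iff, AddMonoidHom.mem_ker, funext_iff,
    Finpartition.partSum_apply, Pi.zero_apply, Subtype.forall]
  refine ⟨fun h p hp => ?_, fun h v => h _ (P.part_mem.2 (mem_univ v))⟩
  obtain ⟨v, hv⟩ := P.nonempty_of_mem_parts hp
  exact P.part_eq_of_mem hp hv ▸ h v

lemma winCount_cliqueCoverStrategy_mul :
    winCount G.Adj s (cliqueCoverStrategy P hP) * s ^ #P.parts = s ^ Fintype.card V := by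
  have hcount : winCount G.Adj s (cliqueCoverStrategy P hP) = Nat.card (P.partSum (Fin s)).ker :=
    Nat.card_congr (Equiv.subtypeEquivRight (cliqueCoverStrategy_wins_iff P hP))
  simpa [hcount] using P.card_ker_partSum_mul (Fin s)

lemma winP_cliqueCoverStrategy :
    winP G.Adj s (cliqueCoverStrategy P hP) = (1 / (s : ℝ)) ^ #P.parts := by
  have hW : (winCount G.Adj s (cliqueCoverStrategy P hP) : ℝ) ≠ 0 := by
    have hpow : s ^ Fintype.card V ≠ 0 := pow_ne_zero _ (NeZero.ne s)
    rw [← winCount_cliqueCoverStrategy_mul P hP] at hpow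
    exact_mod_cast left_ne_zero_of_mul hpow
  rw [winP, ← winCount_cliqueCoverStrategy_mul P hP, Nat.cast_mul, div_mul_cancel_left₀ hW,
    one_div_pow, one_div, Nat.cast_pow]

end CliqueCoverStrategy

lemma exists_finpartition_isClique_card_eq_cliqueCoverNum {V : Type*} [Fintype V]
    [DecidableEq V] (G : SimpleGraph V) :
    ∃ P : Finpartition (univ : Finset V),
      #P.parts = cliqueCoverNum G ∧ ∀ p ∈ P.parts, G.IsClique (p : Set V) :=
  Nat.sInf_mem (s := {n | ∃ P : Finpartition (univ : Finset V),
    #P.parts = n ∧ ∀ p ∈ P.parts, G.IsClique (p : Set V)}) ⟨_, ⊥, rfl, by simp⟩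

/-- If an undirected graph `G` is partitioned into `k` vertex-disjoint
cliques, then the guessing game `(G,s)` admits a strategy winning with probability
`s^{-k}`; hence `gn(G,s) ≥ |V(G)| − κ(G)`. -/
theorem cliqueCover_strategy {V : Type*} [Fintype V] [DecidableEq V] (G : SimpleGraph V)
    (s k : ℕ) (hs : 1 ≤ s) (P : Finpartition (Finset.univ : Finset V))
    (hP : ∀ p ∈ P.parts, G.IsClique (p : Set V)) (hk : P.parts.card = k) :
    (∃ F : GuessStrategy V G.Adj s, winP G.Adj s F = ((1 : ℝ) / s) ^ k) ∧
    gn G.Adj s ≥ Fintype.card V - cliqueCoverNum G := by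
  have : NeZero s := ⟨by omega⟩
  refine ⟨⟨cliqueCoverStrategy P hP, hk ▸ winP_cliqueCoverStrategy P hP⟩, ?_⟩
  obtain ⟨Q, hQcard, hQ⟩ := exists_finpartition_isClique_card_eq_cliqueCoverNum G
  apply card_sub_le_gn_of_pow_le_maxWinP
  rw [← hQcard, ← winP_cliqueCoverStrategy Q hQ]
  exact winP_le_maxWinP _ _ _
end

section
/- Let X_G be a finite set of discrete random variables, and suppose a real-valued set function H on subsets of X_G satisfies: (i) H(Y) ≤ H(X_G) for all Y ⊆ X_G with |Y| = |X_G| − 1, and (ii) H(Y) + H(Z) − H(Y∪Z) − H(Y∩Z) ≥ 0 for all Y, Z ⊆ X_G with |Y| = |Z| = |Y∩Z| + 1. Then H satisfies all Shannon inequalities H(A∪C) + H(B∪C) − H(A∪B∪C) − H(C) ≥ 0 for all A, B, C ⊆ X_G, and conversely the Shannon inequalities imply (i) and (ii). -/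
/-!
Condition (ii) says that the marginal gain `H (insert x S) - H S` can only drop when one
element is added to `S`; telescoping over a chain `S ⊆ T`, and then over the elements of `Y \ Z`,
upgrades this to full submodularity. Decreasing marginal gains together with (i) bound every
marginal gain below by `H univ - H (univ.erase x) ≥ 0`, so `H` is monotone. A Shannon inequality
is submodularity for `A ∪ C` and `B ∪ C` followed by monotonicity on `C ⊆ (A ∪ C) ∩ (B ∪ C)`.
-/

open Finset

section SetFunction

variable {α : Type*} [DecidableEq α] {H : Finset α → ℝ}

def ElementarySubmodular (H : Finset α → ℝ) : Prop :=
  ∀ ⦃W : Finset α⦄ ⦃x y : α⦄, x ∉ W → y ∉ W → x ≠ y →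
    H (insert x (insert y W)) + H W ≤ H (insert x W) + H (insert y W)

lemma elementarySubmodular_of_card_inter_add_one
    (h : ∀ Y Z : Finset α, Y.card = (Y ∩ Z).card + 1 → Z.card = (Y ∩ Z).card + 1 →
      H Y + H Z - H (Y ∪ Z) - H (Y ∩ Z) ≥ 0) :
    ElementarySubmodular H := by
  intro W x y hx hy hxy
  have hinter : insert x W ∩ insert y W = W := by
    ext z; simp only [mem_inter, mem_insert]; constructor <;> aesop
  have hunion : insert x W ∪ insert y W = insert x (insert y W) := by
    rw [insert_union, union_insert, union_self]
  have := h (insert x W) (insert y W) (by rw [hinter, card_insert_of_notMem hx])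
    (by rw [hinter, card_insert_of_notMem hy])
  rw [hinter, hunion] at this
  linarith

namespace ElementarySubmodular

lemma sub_le_sub_of_subset (hH : ElementarySubmodular H) {S T : Finset α} {x : α}
    (hST : S ⊆ T) (hx : x ∉ T) :
    H (insert x T) - H T ≤ H (insert x S) - H S := by
  obtain ⟨D, rfl⟩ : ∃ D, T = S ∪ D := ⟨T \ S, (union_sdiff_of_subset hST).symm⟩
  clear hST
  induction D using Finset.induction_on with
  | empty => simp
  | insert y D _ ih =>
    rw [union_insert] at hx ⊢
    have hxD : x ∉ S ∪ D := fun h ↦ hx (mem_insert_of_mem h)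
    by_cases hy : y ∈ S ∪ D
    · rw [insert_eq_of_mem hy]
      exact ih hxD
    · have hxy : x ≠ y := by rintro rfl; exact hx (mem_insert_self x _)
      linarith [hH hxD hy hxy, ih hxD]

lemma union_sub_le_union_sub (hH : ElementarySubmodular H) {A B C : Finset α}
    (hCB : C ⊆ B) (hAB : Disjoint A B) :
    H (B ∪ A) - H B ≤ H (C ∪ A) - H C := by
  induction A using Finset.induction_on with
  | empty => simp
  | insert x A hxA ih =>
    rw [disjoint_insert_left] at hAB
    have hx : x ∉ B ∪ A := by simp [hAB.1, hxA]
    rw [union_insert, union_insert]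
    linarith [hH.sub_le_sub_of_subset (union_subset_union hCB subset_rfl) hx, ih hAB.2]

lemma union_add_inter_le (hH : ElementarySubmodular H) (Y Z : Finset α) :
    H (Y ∪ Z) + H (Y ∩ Z) ≤ H Y + H Z := by
  have := hH.union_sub_le_union_sub (A := Y \ Z) (C := Y ∩ Z) inter_subset_right sdiff_disjoint
  rw [union_sdiff_self_eq_union, union_comm, union_comm (Y ∩ Z), sdiff_union_inter] at this
  linarith

lemma monotone [Fintype α] (hH : ElementarySubmodular H)
    (htop : ∀ x, H (univ.erase x) ≤ H univ) : Monotone H := by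
  refine monotone_iff_forall_le_insert.mpr fun W x hx ↦ ?_
  have := hH.sub_le_sub_of_subset (subset_erase.mpr ⟨subset_univ W, hx⟩) (notMem_erase x univ)
  rw [insert_erase (mem_univ x)] at this
  linarith [htop x]

end ElementarySubmodular

end SetFunction

/-- A set function `H` on the subsets of a finite ground set satisfies
all Shannon inequalities `H(A∪C) + H(B∪C) − H(A∪B∪C) − H(C) ≥ 0` if and only if it
satisfies (i) `H(Y) ≤ H(ground)` for all `Y` of size `|ground| − 1`, and (ii) the
elementary submodularity inequalities for `Y, Z` with `|Y| = |Z| = |Y∩Z| + 1`. -/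
theorem shannon_reduction {α : Type*} [Fintype α] [DecidableEq α] (H : Finset α → ℝ) :
    ((∀ Y : Finset α, Y.card = Fintype.card α - 1 → H Y ≤ H Finset.univ) ∧
      (∀ Y Z : Finset α, Y.card = (Y ∩ Z).card + 1 → Z.card = (Y ∩ Z).card + 1 →
        H Y + H Z - H (Y ∪ Z) - H (Y ∩ Z) ≥ 0)) ↔
    (∀ A B C : Finset α, H (A ∪ C) + H (B ∪ C) - H (A ∪ B ∪ C) - H C ≥ 0) := by
  constructor
  · rintro ⟨htop, hsq⟩ A B C
    have hH := elementarySubmodular_of_card_inter_add_one hsq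
    have hmono := hH.monotone fun x ↦ htop _ (by simp [card_erase_of_mem])
    have hsub := hH.union_add_inter_le (A ∪ C) (B ∪ C)
    have hC : H C ≤ H ((A ∪ C) ∩ (B ∪ C)) :=
      hmono (subset_inter subset_union_right subset_union_right)
    rw [← union_union_distrib_right] at hsub
    linarith
  · intro hS
    refine ⟨fun Y _ ↦ ?_, fun Y Z _ _ ↦ ?_⟩
    · simpa [← sup_eq_union, compl_sup_eq_top] using hS Yᶜ Yᶜ Y
    · have := hS Y Z (Y ∩ Z)
      rwa [union_eq_left.mpr inter_subset_left, union_eq_left.mpr inter_subset_right,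
        union_eq_left.mpr (inter_subset_left.trans subset_union_left)] at this
end
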